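/- arXiv:2201.04707 — 5 statements merged into one kernel-verified Lean document; each statement's English description precedes it below -/
import Mathlib

section
/- Deduction theorem for QBK: for every set Γ of σ-sentences, every σ-sentence Φ and every σ-formula Ψ, Γ∪{Φ} ⊢ Ψ if and only if Γ ⊢ Φ→Ψ. -/
/-! Signatures, terms, formulas -/

structure Sig where
  Pred : Type
  arity : Pred → ℕ
  Const : Type

inductive Term (σ : Sig) where
  | var : ℕ → Term σ
  | const : σ.Const → Term σ

inductive Formula (σ : Sig) where
  | atom (P : σ.Pred) (ts : Fin (σ.arity P) → Term σ) : Formula σ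
  | bot : Formula σ
  | imp : Formula σ → Formula σ → Formula σ
  | and : Formula σ → Formula σ → Formula σ
  | or : Formula σ → Formula σ → Formula σ
  | snot : Formula σ → Formula σ
  | box : Formula σ → Formula σ
  | dia : Formula σ → Formula σ
  | all : ℕ → Formula σ → Formula σ
  | ex : ℕ → Formula σ → Formula σ

def Term.fv {σ : Sig} : Term σ → Finset ℕ
  | .var x => {x}
  | .const _ => ∅

def Term.substT {σ : Sig} (x : ℕ) (t : Term σ) : Term σ → Term σ
  | .var y => if y = x then t else .var y
  | .const c => .const c

def Formula.fv {σ : Sig} : Formula σ → Finset ℕ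
  | .atom _ ts => Finset.univ.biUnion fun i => (ts i).fv
  | .bot => ∅
  | .imp A B => A.fv ∪ B.fv
  | .and A B => A.fv ∪ B.fv
  | .or A B => A.fv ∪ B.fv
  | .snot A => A.fv
  | .box A => A.fv
  | .dia A => A.fv
  | .all x A => A.fv.erase x
  | .ex x A => A.fv.erase x

/-- Simultaneous substitution of the term `t` for the free occurrences of the variable `x`. -/
def Formula.subst {σ : Sig} (x : ℕ) (t : Term σ) : Formula σ → Formula σ
  | .atom P ts => .atom P fun i => (ts i).substT x t
  | .bot => .bot
  | .imp A B => (A.subst x t).imp (B.subst x t)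
  | .and A B => (A.subst x t).and (B.subst x t)
  | .or A B => (A.subst x t).or (B.subst x t)
  | .snot A => (A.subst x t).snot
  | .box A => (A.subst x t).box
  | .dia A => (A.subst x t).dia
  | .all y A => if y = x then .all y A else .all y (A.subst x t)
  | .ex y A => if y = x then .ex y A else .ex y (A.subst x t)

/-- `t` is free for `x` in the formula. -/
def FreeFor {σ : Sig} (x : ℕ) (t : Term σ) : Formula σ → Prop
  | .atom _ _ => True
  | .bot => True
  | .imp A B => FreeFor x t A ∧ FreeFor x t B
  | .and A B => FreeFor x t A ∧ FreeFor x t B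
  | .or A B => FreeFor x t A ∧ FreeFor x t B
  | .snot A => FreeFor x t A
  | .box A => FreeFor x t A
  | .dia A => FreeFor x t A
  | .all y A => x ∉ (Formula.all y A).fv ∨ (y ∉ t.fv ∧ FreeFor x t A)
  | .ex y A => x ∉ (Formula.ex y A).fv ∨ (y ∉ t.fv ∧ FreeFor x t A)

/-- Material negation ¬Φ := Φ → ⊥. -/
def Formula.neg {σ : Sig} (A : Formula σ) : Formula σ := A.imp .bot

/-- Material equivalence Φ ↔ Ψ. -/
def Formula.fiff {σ : Sig} (A B : Formula σ) : Formula σ := (A.imp B).and (B.imp A)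

/-- Strong equivalence Φ ⇔ Ψ := (Φ↔Ψ) ∧ (∼Φ↔∼Ψ). -/
def Formula.siff {σ : Sig} (A B : Formula σ) : Formula σ := (A.fiff B).and (A.snot.fiff B.snot)

/-- A sentence is a formula with no free variables. -/
def Sentence {σ : Sig} (A : Formula σ) : Prop := A.fv = ∅

/-! The Hilbert-style calculus: QBK and its extensions by extra axiom schemes `Ex`. -/

inductive QBKext (σ : Sig) (Ex : Formula σ → Prop) : Formula σ → Prop where
  | extra {A} : Ex A → QBKext σ Ex A
  | i1 (A B : Formula σ) : QBKext σ Ex (A.imp (B.imp A))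
  | i2 (A B C : Formula σ) : QBKext σ Ex ((A.imp (B.imp C)).imp ((A.imp B).imp (A.imp C)))
  | c1 (A B : Formula σ) : QBKext σ Ex ((A.and B).imp A)
  | c2 (A B : Formula σ) : QBKext σ Ex ((A.and B).imp B)
  | c3 (A B : Formula σ) : QBKext σ Ex (A.imp (B.imp (A.and B)))
  | d1 (A B : Formula σ) : QBKext σ Ex (A.imp (A.or B))
  | d2 (A B : Formula σ) : QBKext σ Ex (B.imp (A.or B))
  | d3 (A B C : Formula σ) : QBKext σ Ex ((A.imp C).imp ((B.imp C).imp ((A.or B).imp C)))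
  | n1 (A : Formula σ) : QBKext σ Ex (A.or (A.imp .bot))
  | n2 (A : Formula σ) : QBKext σ Ex (Formula.bot.imp A)
  | sn1 (A : Formula σ) : QBKext σ Ex (A.snot.snot.fiff A)
  | sn2 (A B : Formula σ) : QBKext σ Ex ((A.imp B).snot.fiff (A.and B.snot))
  | sn3 (A B : Formula σ) : QBKext σ Ex ((A.or B).snot.fiff (A.snot.and B.snot))
  | sn4 (A B : Formula σ) : QBKext σ Ex ((A.and B).snot.fiff (A.snot.or B.snot))
  | sn5 : QBKext σ Ex Formula.bot.snot
  | k1 (A B : Formula σ) : QBKext σ Ex ((A.box.and B.box).imp (A.and B).box)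
  | k2 (A : Formula σ) : QBKext σ Ex (A.imp A).box
  | m1 (A : Formula σ) : QBKext σ Ex (A.box.neg.fiff A.neg.dia)
  | m2 (A : Formula σ) : QBKext σ Ex (A.dia.neg.fiff A.neg.box)
  | m3 (A : Formula σ) : QBKext σ Ex (A.box.siff A.snot.dia.snot)
  | m4 (A : Formula σ) : QBKext σ Ex (A.dia.siff A.snot.box.snot)
  | q1 {x : ℕ} {t : Term σ} {A : Formula σ} :
      FreeFor x t A → QBKext σ Ex ((Formula.all x A).imp (A.subst x t))
  | q2 {x : ℕ} {t : Term σ} {A : Formula σ} :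
      FreeFor x t A → QBKext σ Ex ((A.subst x t).imp (Formula.ex x A))
  | q3 (x : ℕ) (A : Formula σ) : QBKext σ Ex ((Formula.all x A).snot.fiff (Formula.ex x A.snot))
  | q4 (x : ℕ) (A : Formula σ) : QBKext σ Ex ((Formula.ex x A).snot.fiff (Formula.all x A.snot))
  | mp {A B : Formula σ} : QBKext σ Ex (A.imp B) → QBKext σ Ex A → QBKext σ Ex B
  | mb {A B : Formula σ} : QBKext σ Ex (A.imp B) → QBKext σ Ex (A.box.imp B.box)
  | md {A B : Formula σ} : QBKext σ Ex (A.imp B) → QBKext σ Ex (A.dia.imp B.dia)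
  | br1 {A B : Formula σ} {x : ℕ} :
      QBKext σ Ex (A.imp B) → x ∉ A.fv → QBKext σ Ex (A.imp (Formula.all x B))
  | br2 {A B : Formula σ} {x : ℕ} :
      QBKext σ Ex (A.imp B) → x ∉ B.fv → QBKext σ Ex ((Formula.ex x A).imp B)

/-- The logic QBK. -/
def QBK (σ : Sig) : Formula σ → Prop := QBKext σ fun _ => False

/-- Extra scheme Φ ∨ ∼Φ. -/
def ExMidSNAx (σ : Sig) : Formula σ → Prop := fun φ => ∃ A : Formula σ, φ = A.or A.snot

/-- Extra scheme ∼Φ → (Φ → Ψ). -/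
def ExplSNAx (σ : Sig) : Formula σ → Prop := fun φ => ∃ A B : Formula σ, φ = A.snot.imp (A.imp B)

/-- The Barcan scheme ◇∃xΦ → ∃x◇Φ. -/
def BaAx (σ : Sig) : Formula σ → Prop :=
  fun φ => ∃ (x : ℕ) (A : Formula σ), φ = (Formula.ex x A).dia.imp (Formula.ex x A.dia)

/-- The Barcan scheme ∀x□Φ → □∀xΦ. -/
def BaBoxAx (σ : Sig) : Formula σ → Prop :=
  fun φ => ∃ (x : ℕ) (A : Formula σ), φ = (Formula.all x A.box).imp (Formula.all x A).box

def QBKc (σ : Sig) : Formula σ → Prop := QBKext σ (ExMidSNAx σ)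
def QB3K (σ : Sig) : Formula σ → Prop := QBKext σ (ExplSNAx σ)
def QBKsharp (σ : Sig) : Formula σ → Prop := QBKext σ (BaAx σ)
def QBKsharpBox (σ : Sig) : Formula σ → Prop := QBKext σ (BaBoxAx σ)

/-! Derivability from a theory: modus ponens and the Bernays rules applied to Γ ∪ L. -/

inductive Deriv {σ : Sig} (L : Formula σ → Prop) (Γ : Set (Formula σ)) : Formula σ → Prop where
  | hyp {φ} : φ ∈ Γ → Deriv L Γ φ
  | frm {φ} : L φ → Deriv L Γ φ
  | mp {φ ψ} : Deriv L Γ (φ.imp ψ) → Deriv L Γ φ → Deriv L Γ ψ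
  | br1 {φ ψ : Formula σ} {x : ℕ} :
      Deriv L Γ (φ.imp ψ) → x ∉ φ.fv → Deriv L Γ (φ.imp (Formula.all x ψ))
  | br2 {φ ψ : Formula σ} {x : ℕ} :
      Deriv L Γ (φ.imp ψ) → x ∉ ψ.fv → Deriv L Γ ((Formula.ex x φ).imp ψ)

/-- Finite disjunction of a list of formulas; the empty disjunction is ⊥. -/
def disjList {σ : Sig} : List (Formula σ) → Formula σ
  | [] => .bot
  | [φ] => φ
  | φ :: l => φ.or (disjList l)

/-- Γ ⊢ Δ : some finite disjunction of members of Δ is derivable from Γ ∪ L. -/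
def DerivSet {σ : Sig} (L : Formula σ → Prop) (Γ Δ : Set (Formula σ)) : Prop :=
  ∃ l : List (Formula σ), (∀ φ ∈ l, φ ∈ Δ) ∧ Deriv L Γ (disjList l)

/-! Possible-world semantics. -/

/-- σ enriched with a fresh constant for every element of `S`. -/
@[reducible] def sigExt (σ : Sig) (S : Type) : Sig := ⟨σ.Pred, σ.arity, σ.Const ⊕ S⟩

def Term.pl {σ : Sig} {S : Type} : Term σ → Term (sigExt σ S)
  | .var x => .var x
  | .const c => .const (Sum.inl c)

/-- A σ-formula viewed as a formula of the enriched signature. -/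
def Formula.pl {σ : Sig} {S : Type} : Formula σ → Formula (sigExt σ S)
  | .atom P ts => .atom P fun i => (ts i).pl
  | .bot => .bot
  | .imp A B => A.pl.imp B.pl
  | .and A B => A.pl.and B.pl
  | .or A B => A.pl.or B.pl
  | .snot A => A.pl.snot
  | .box A => A.pl.box
  | .dia A => A.pl.dia
  | .all x A => .all x A.pl
  | .ex x A => .ex x A.pl

/-- A possible-world structure for σ: a frame together with, at each world, a pair of
σ-structures sharing the domain `D w` (positive and negative interpretation of predicates,
a common interpretation of constants). -/
structure Model (σ : Sig) where
  W : Type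
  R : W → W → Prop
  U : Type
  D : W → Set U
  cI : W → σ.Const → U
  pPos : (w : W) → (P : σ.Pred) → (Fin (σ.arity P) → U) → Prop
  pNeg : (w : W) → (P : σ.Pred) → (Fin (σ.arity P) → U) → Prop

/-- The conditions turning a structure into a QBK_σ-model: nonempty set of worlds, nonempty
domains containing the constants, expanding domains and preserved constants along R. -/
def Model.IsQBK {σ : Sig} (M : Model σ) : Prop :=
  Nonempty M.W ∧ (∀ w, (M.D w).Nonempty) ∧ (∀ w c, M.cI w c ∈ M.D w) ∧
    (∀ u v, M.R u v → M.D u ⊆ M.D v) ∧ (∀ u v, M.R u v → ∀ c, M.cI u c = M.cI v c)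

/-- Value of a term with parameters from the domain, under an assignment `g`. -/
def Model.tval {σ : Sig} (M : Model σ) (w : M.W) (g : ℕ → M.U) : Term (sigExt σ M.U) → M.U
  | .var x => g x
  | .const (Sum.inl c) => M.cI w c
  | .const (Sum.inr a) => a

/-- Verification (`true`) and falsification (`false`) of formulas with parameters from the
domain, at a world, under an assignment. -/
def Model.force {σ : Sig} (M : Model σ) :
    Formula (sigExt σ M.U) → Bool → M.W → (ℕ → M.U) → Prop
  | .atom P ts, true, w, g => M.pPos w P fun i => M.tval w g (ts i)
  | .atom P ts, false, w, g => M.pNeg w P fun i => M.tval w g (ts i)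
  | .bot, true, _, _ => False
  | .bot, false, _, _ => True
  | .imp A B, true, w, g => M.force A true w g → M.force B true w g
  | .imp A B, false, w, g => M.force A true w g ∧ M.force B false w g
  | .and A B, true, w, g => M.force A true w g ∧ M.force B true w g
  | .and A B, false, w, g => M.force A false w g ∨ M.force B false w g
  | .or A B, true, w, g => M.force A true w g ∨ M.force B true w g
  | .or A B, false, w, g => M.force A false w g ∧ M.force B false w g
  | .snot A, b, w, g => M.force A (!b) w g
  | .box A, true, w, g => ∀ v, M.R w v → M.force A true v g
  | .box A, false, w, g => ∃ v, M.R w v ∧ M.force A false v g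
  | .dia A, true, w, g => ∃ v, M.R w v ∧ M.force A true v g
  | .dia A, false, w, g => ∀ v, M.R w v → M.force A false v g
  | .all x A, true, w, g => ∀ a ∈ M.D w, M.force A true w (Function.update g x a)
  | .all x A, false, w, g => ∃ a ∈ M.D w, M.force A false w (Function.update g x a)
  | .ex x A, true, w, g => ∃ a ∈ M.D w, M.force A true w (Function.update g x a)
  | .ex x A, false, w, g => ∀ a ∈ M.D w, M.force A false w (Function.update g x a)

/-- Semantic consequence over the models in the class `C`. -/
def SemConsIn {σ : Sig} (C : Model σ → Prop) (Γ Δ : Set (Formula σ)) : Prop :=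
  ∀ M : Model σ, C M → ∀ (w : M.W) (g : ℕ → M.U), (∀ x, g x ∈ M.D w) →
    (∀ φ ∈ Γ, M.force φ.pl true w g) → ∃ ψ ∈ Δ, M.force ψ.pl true w g

/-! Theories. -/

/-- A prime theory (with respect to a logic `L`). -/
def PrimeTheory {σ : Sig} (L : Formula σ → Prop) (Γ : Set (Formula σ)) : Prop :=
  (∀ φ ∈ Γ, Sentence φ) ∧ Γ ≠ {φ | Sentence φ} ∧
    (∀ φ : Formula σ, Sentence φ → DerivSet L Γ {φ} → φ ∈ Γ) ∧
    (∀ A B : Formula σ, A.or B ∈ Γ → A ∈ Γ ∨ B ∈ Γ)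

/-- A saturated theory: prime with the existential property. -/
def Saturated {σ : Sig} (L : Formula σ → Prop) (Γ : Set (Formula σ)) : Prop :=
  PrimeTheory L Γ ∧ ∀ (x : ℕ) (A : Formula σ),
    Formula.ex x A ∈ Γ → ∃ c : σ.Const, A.subst x (.const c) ∈ Γ

/-! Replacement of subformulas, negation-freeness, negative normal form. -/

open Classical in
/-- Simultaneous replacement of all occurrences of the subformula `Φ` by `Ψ`. -/
noncomputable def Formula.replace {σ : Sig} (Φ Ψ : Formula σ) : Formula σ → Formula σ
  | .atom P ts => if Formula.atom P ts = Φ then Ψ else .atom P ts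
  | .bot => if (Formula.bot : Formula σ) = Φ then Ψ else .bot
  | .imp A B => if A.imp B = Φ then Ψ else (replace Φ Ψ A).imp (replace Φ Ψ B)
  | .and A B => if A.and B = Φ then Ψ else (replace Φ Ψ A).and (replace Φ Ψ B)
  | .or A B => if A.or B = Φ then Ψ else (replace Φ Ψ A).or (replace Φ Ψ B)
  | .snot A => if A.snot = Φ then Ψ else (replace Φ Ψ A).snot
  | .box A => if A.box = Φ then Ψ else (replace Φ Ψ A).box
  | .dia A => if A.dia = Φ then Ψ else (replace Φ Ψ A).dia
  | .all x A => if Formula.all x A = Φ then Ψ else .all x (replace Φ Ψ A)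
  | .ex x A => if Formula.ex x A = Φ then Ψ else .ex x (replace Φ Ψ A)

/-- The formula does not contain the strong negation ∼. -/
def NegFree {σ : Sig} : Formula σ → Prop
  | .atom _ _ => True
  | .bot => True
  | .imp A B => NegFree A ∧ NegFree B
  | .and A B => NegFree A ∧ NegFree B
  | .or A B => NegFree A ∧ NegFree B
  | .snot _ => False
  | .box A => NegFree A
  | .dia A => NegFree A
  | .all _ A => NegFree A
  | .ex _ A => NegFree A

/-- Negative normal form: ∼ occurs only immediately in front of atoms or ⊥. -/
def IsNNF {σ : Sig} : Formula σ → Prop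
  | .snot (.atom _ _) => True
  | .snot .bot => True
  | .snot _ => False
  | .atom _ _ => True
  | .bot => True
  | .imp A B => IsNNF A ∧ IsNNF B
  | .and A B => IsNNF A ∧ IsNNF B
  | .or A B => IsNNF A ∧ IsNNF B
  | .box A => IsNNF A
  | .dia A => IsNNF A
  | .all _ A => IsNNF A
  | .ex _ A => IsNNF A
/-! Canonical models. -/

def Term.mapC {σ : Sig} {S S' : Type} (h : σ.Const ⊕ S → σ.Const ⊕ S') :
    Term (sigExt σ S) → Term (sigExt σ S')
  | .var x => .var x
  | .const c => .const (h c)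

/-- Renaming the enriched constants of a formula along `h`. -/
def Formula.mapC {σ : Sig} {S S' : Type} (h : σ.Const ⊕ S → σ.Const ⊕ S') :
    Formula (sigExt σ S) → Formula (sigExt σ S')
  | .atom P ts => .atom P fun i => (ts i).mapC h
  | .bot => .bot
  | .imp A B => (A.mapC h).imp (B.mapC h)
  | .and A B => (A.mapC h).and (B.mapC h)
  | .or A B => (A.mapC h).or (B.mapC h)
  | .snot A => (A.mapC h).snot
  | .box A => (A.mapC h).box
  | .dia A => (A.mapC h).dia
  | .all x A => .all x (A.mapC h)
  | .ex x A => .ex x (A.mapC h)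

/-- `S ⊆ S★` is admissible if its complement has the full cardinality of `S★`. -/
def Admissible {Sstar : Type} (A : Set Sstar) : Prop :=
  Cardinal.mk ↥(Aᶜ) = Cardinal.mk Sstar

/-- Worlds of the canonical model for QBK: saturated σ_S-theories for admissible S ⊆ S★. -/
structure CanonWorld (σ : Sig) (Sstar : Type) where
  A : Set Sstar
  adm : Admissible A
  th : Set (Formula (sigExt σ ↥A))
  sat : Saturated (QBK (sigExt σ ↥A)) th

/-- The canonical model for QBK. -/
@[reducible] def canonQBK (σ : Sig) (Sstar : Type) : Model σ where
  W := CanonWorld σ Sstar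
  R := fun u v =>
    (Formula.mapC (σ := σ) (Sum.map id Subtype.val) '' {φ | φ.box ∈ u.th}) ⊆
      Formula.mapC (σ := σ) (Sum.map id Subtype.val) '' v.th
  U := σ.Const ⊕ Sstar
  D := fun w => Set.range fun c : (sigExt σ ↥w.A).Const => (Sum.map id Subtype.val c : σ.Const ⊕ Sstar)
  cI := fun _ c => Sum.inl c
  pPos := fun w P args => ∃ cs : Fin (σ.arity P) → (sigExt σ ↥w.A).Const,
    (∀ i, Sum.map id Subtype.val (cs i) = args i) ∧
      (Formula.atom P fun i => Term.const (cs i) : Formula (sigExt σ ↥w.A)) ∈ w.th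
  pNeg := fun w P args => ∃ cs : Fin (σ.arity P) → (sigExt σ ↥w.A).Const,
    (∀ i, Sum.map id Subtype.val (cs i) = args i) ∧
      (Formula.atom P fun i => Term.const (cs i) : Formula (sigExt σ ↥w.A)).snot ∈ w.th

/-- A σ_S-sentence regarded as a sentence with parameters from the domain of the
canonical model (each constant is sent to itself, viewed as a parameter). -/
def toParQBK {σ : Sig} {Sstar : Type} {A : Set Sstar} :
    Formula (sigExt σ ↥A) → Formula (sigExt σ (σ.Const ⊕ Sstar)) :=
  Formula.mapC fun c => Sum.inr (Sum.map id Subtype.val c)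

/-- The canonical model for QBK♯ (constant domains): worlds are all saturated σ★-theories. -/
@[reducible] def canonSharp (σ : Sig) (Sstar : Type) : Model σ where
  W := {Γ : Set (Formula (sigExt σ Sstar)) // Saturated (QBKsharp (sigExt σ Sstar)) Γ}
  R := fun u v => {φ | φ.box ∈ u.val} ⊆ v.val
  U := σ.Const ⊕ Sstar
  D := fun _ => Set.univ
  cI := fun _ c => Sum.inl c
  pPos := fun w P args =>
    (Formula.atom P fun i => Term.const (args i) : Formula (sigExt σ Sstar)) ∈ w.val
  pNeg := fun w P args =>
    (Formula.atom P fun i => Term.const (args i) : Formula (sigExt σ Sstar)).snot ∈ w.val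

/-- A σ★-sentence regarded as a sentence with parameters from the (constant) domain of the
canonical model for QBK♯. -/
def toParSharp {σ : Sig} {Sstar : Type} :
    Formula (sigExt σ Sstar) → Formula (sigExt σ (σ.Const ⊕ Sstar)) :=
  Formula.mapC Sum.inr
/-! Auxiliary material for the deduction theorem. -/

/-- Hilbert-style derivability with only modus ponens (auxiliary). -/
inductive HDer (σ : Sig) (Ex : Formula σ → Prop) (Γ : Set (Formula σ)) : Formula σ → Prop where
  | hyp {φ} : φ ∈ Γ → HDer σ Ex Γ φ
  | ax {φ} : QBKext σ Ex φ → HDer σ Ex Γ φ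
  | mp {φ ψ} : HDer σ Ex Γ (φ.imp ψ) → HDer σ Ex Γ φ → HDer σ Ex Γ ψ

lemma QBKext.idThm {σ : Sig} {Ex : Formula σ → Prop} (A : Formula σ) :
    QBKext σ Ex (A.imp A) :=
  .mp (.mp (.i2 A (A.imp A) A) (.i1 A (A.imp A))) (.i1 A A)

lemma HDer.ded {σ : Sig} {Ex : Formula σ → Prop} {Γ : Set (Formula σ)} {A B : Formula σ}
    (h : HDer σ Ex (insert A Γ) B) : HDer σ Ex Γ (A.imp B) := by
  induction h with
  | hyp h =>
    rcases h with h | h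
    · subst h; exact .ax (QBKext.idThm _)
    · exact .mp (.ax (.i1 _ A)) (.hyp h)
  | ax h => exact .mp (.ax (.i1 _ A)) (.ax h)
  | mp _ _ ih1 ih2 => exact .mp (.mp (.ax (.i2 A _ _)) ih1) ih2

lemma HDer.toThm {σ : Sig} {Ex : Formula σ → Prop} {A : Formula σ}
    (h : HDer σ Ex ∅ A) : QBKext σ Ex A := by
  induction h with
  | hyp h => exact absurd h (Set.notMem_empty _)
  | ax h => exact h
  | mp _ _ ih1 ih2 => exact .mp ih1 ih2

lemma QBKext.swapThm {σ : Sig} {Ex : Formula σ → Prop} (A B C : Formula σ) :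
    QBKext σ Ex ((A.imp (B.imp C)).imp (B.imp (A.imp C))) := by
  apply HDer.toThm; apply HDer.ded; apply HDer.ded; apply HDer.ded
  exact .mp (.mp (.hyp (φ := A.imp (B.imp C)) (by simp)) (.hyp (φ := A) (by simp)))
    (.hyp (φ := B) (by simp))

lemma QBKext.exportThm {σ : Sig} {Ex : Formula σ → Prop} (A B C : Formula σ) :
    QBKext σ Ex ((A.imp (B.imp C)).imp ((A.and B).imp C)) := by
  apply HDer.toThm; apply HDer.ded; apply HDer.ded
  exact .mp (.mp (.hyp (φ := A.imp (B.imp C)) (by simp)) (.mp (.ax (.c1 A B))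
    (.hyp (φ := A.and B) (by simp)))) (.mp (.ax (.c2 A B)) (.hyp (φ := A.and B) (by simp)))

lemma QBKext.importThm {σ : Sig} {Ex : Formula σ → Prop} (A B C : Formula σ) :
    QBKext σ Ex (((A.and B).imp C).imp (A.imp (B.imp C))) := by
  apply HDer.toThm; apply HDer.ded; apply HDer.ded; apply HDer.ded
  exact .mp (.hyp (φ := (A.and B).imp C) (by simp)) (.mp (.mp (.ax (.c3 A B))
    (.hyp (φ := A) (by simp))) (.hyp (φ := B) (by simp)))

lemma disjList_imp {σ : Sig} {Ex : Formula σ → Prop} (Ψ : Formula σ) :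
    ∀ l : List (Formula σ), (∀ φ ∈ l, φ = Ψ) → QBKext σ Ex ((disjList l).imp Ψ) := by
  intro l
  induction l with
  | nil => intro _; exact .n2 Ψ
  | cons φ l ih =>
    intro h
    have hφ : φ = Ψ := h φ (by simp)
    subst hφ
    cases l with
    | nil => exact QBKext.idThm φ
    | cons ψ l' =>
      have ih' := ih fun χ hχ => h χ (List.mem_cons_of_mem _ hχ)
      show QBKext σ Ex ((φ.or (disjList (ψ :: l'))).imp φ)
      exact .mp (.mp (.d3 φ (disjList (ψ :: l')) φ) (QBKext.idThm φ)) ih'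

lemma Deriv.mono {σ : Sig} {L : Formula σ → Prop} {Γ Γ' : Set (Formula σ)} {φ : Formula σ}
    (h : Deriv L Γ φ) (hsub : Γ ⊆ Γ') : Deriv L Γ' φ := by
  induction h with
  | hyp h => exact .hyp (hsub h)
  | frm h => exact .frm h
  | mp _ _ ih1 ih2 => exact .mp ih1 ih2
  | br1 _ hx ih => exact .br1 ih hx
  | br2 _ hx ih => exact .br2 ih hx

lemma Deriv.ded {σ : Sig} {Γ : Set (Formula σ)} {Φ ψ : Formula σ} (hΦ : Sentence Φ)
    (h : Deriv (QBK σ) (insert Φ Γ) ψ) : Deriv (QBK σ) Γ (Φ.imp ψ) := by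
  induction h with
  | hyp h =>
    rcases h with h | h
    · subst h; exact .frm (show QBK σ _ from QBKext.idThm _)
    · exact .mp (.frm (.i1 _ Φ)) (.hyp h)
  | frm h => exact .mp (.frm (.i1 _ Φ)) (.frm h)
  | mp _ _ ih1 ih2 => exact .mp (.mp (.frm (.i2 Φ _ _)) ih1) ih2
  | @br1 φ χ x _ hx ih =>
    have a : Deriv (QBK σ) Γ ((Φ.and φ).imp χ) := .mp (.frm (QBKext.exportThm Φ φ χ)) ih
    have hx' : x ∉ (Φ.and φ).fv := by
      have hfv : Φ.fv = ∅ := hΦ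
      simp [Formula.fv, hfv, hx]
    have b := Deriv.br1 a hx'
    exact .mp (.frm (QBKext.importThm Φ φ (Formula.all x χ))) b
  | @br2 φ χ x _ hx ih =>
    have a : Deriv (QBK σ) Γ (φ.imp (Φ.imp χ)) := .mp (.frm (QBKext.swapThm Φ φ χ)) ih
    have hx' : x ∉ (Φ.imp χ).fv := by
      have hfv : Φ.fv = ∅ := hΦ
      simp [Formula.fv, hfv, hx]
    have b := Deriv.br2 a hx'
    exact .mp (.frm (QBKext.swapThm (Formula.ex x φ) Φ χ)) b

/-- **Deduction theorem for QBK**: for every set Γ of σ-sentences, every σ-sentence Φ and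
every σ-formula Ψ, Γ∪{Φ} ⊢ Ψ if and only if Γ ⊢ Φ→Ψ. -/
theorem deduction_theorem (σ : Sig) (Γ : Set (Formula σ)) (hΓ : ∀ φ ∈ Γ, Sentence φ)
    (Φ : Formula σ) (hΦ : Sentence Φ) (Ψ : Formula σ) :
    DerivSet (QBK σ) (insert Φ Γ) {Ψ} ↔ DerivSet (QBK σ) Γ {Φ.imp Ψ} := by
  constructor
  · rintro ⟨l, hl, hd⟩
    have hall : ∀ φ ∈ l, φ = Ψ := fun φ h => hl φ h
    have hΨ : Deriv (QBK σ) (insert Φ Γ) Ψ :=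
      .mp (.frm (disjList_imp Ψ l hall)) hd
    exact ⟨[Φ.imp Ψ], by simp, Deriv.ded hΦ hΨ⟩
  · rintro ⟨l, hl, hd⟩
    have hall : ∀ φ ∈ l, φ = Φ.imp Ψ := fun φ h => hl φ h
    have h1 : Deriv (QBK σ) Γ (Φ.imp Ψ) :=
      .mp (.frm (disjList_imp (Φ.imp Ψ) l hall)) hd
    have h2 : Deriv (QBK σ) (insert Φ Γ) Ψ :=
      .mp (h1.mono (Set.subset_insert _ _)) (.hyp (Set.mem_insert _ _))
    exact ⟨[Ψ], by simp, h2⟩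
end

section
/- Positive replacement rule: if Φ↔Ψ ∈ QBK_σ and Θ is a σ-formula that does not contain the strong negation ∼, then Θ ↔ Θ(Φ/Ψ) ∈ QBK_σ, where Θ(Φ/Ψ) is the result of simultaneously replacing all occurrences of the subformula Φ in Θ by Ψ. -/
namespace PosRepl

variable {σ : Sig}

local notation "Q" => QBK σ

lemma imp_refl (A : Formula σ) : Q (A.imp A) := by
  have h1 := QBKext.i2 (Ex := fun _ => False) A (A.imp A) A
  have h2 := QBKext.i1 (Ex := fun _ => False) A (A.imp A)
  have h3 := QBKext.i1 (Ex := fun _ => False) A A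
  exact (h1.mp h2).mp h3

lemma trans {A B C : Formula σ} (h1 : Q (A.imp B)) (h2 : Q (B.imp C)) :
    Q (A.imp C) := by
  have h3 : Q (A.imp (B.imp C)) := (QBKext.i1 _ _).mp h2
  exact ((QBKext.i2 A B C).mp h3).mp h1

/-- From `X → (Y → Z)` and `Y`, infer `X → Z`. -/
lemma mp2 {X Y Z : Formula σ} (h1 : Q (X.imp (Y.imp Z))) (h2 : Q Y) :
    Q (X.imp Z) := ((QBKext.i2 X Y Z).mp h1).mp ((QBKext.i1 _ _).mp h2)

lemma fiff_intro {A B : Formula σ} (h1 : Q (A.imp B)) (h2 : Q (B.imp A)) :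
    Q (A.fiff B) := ((QBKext.c3 _ _).mp h1).mp h2

lemma fiff_mp1 {A B : Formula σ} (h : Q (A.fiff B)) : Q (A.imp B) :=
  (QBKext.c1 _ _).mp h

lemma fiff_mp2 {A B : Formula σ} (h : Q (A.fiff B)) : Q (B.imp A) :=
  (QBKext.c2 _ _).mp h

lemma fiff_refl (A : Formula σ) : Q (A.fiff A) :=
  fiff_intro (imp_refl A) (imp_refl A)

/-- From `X → A` and `X → B`, infer `X → A ∧ B`. -/
lemma and_intro_imp {X A B : Formula σ} (h1 : Q (X.imp A)) (h2 : Q (X.imp B)) :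
    Q (X.imp (A.and B)) := by
  have h3 : Q (X.imp (B.imp (A.and B))) := trans h1 (QBKext.c3 A B)
  exact ((QBKext.i2 X B (A.and B)).mp h3).mp h2

lemma and_mono {A A' B B' : Formula σ} (h1 : Q (A.imp A')) (h2 : Q (B.imp B')) :
    Q ((A.and B).imp (A'.and B')) :=
  and_intro_imp (trans (QBKext.c1 A B) h1) (trans (QBKext.c2 A B) h2)

lemma or_mono {A A' B B' : Formula σ} (h1 : Q (A.imp A')) (h2 : Q (B.imp B')) :
    Q ((A.or B).imp (A'.or B')) :=
  ((QBKext.d3 A B (A'.or B')).mp (trans h1 (QBKext.d1 A' B'))).mp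
    (trans h2 (QBKext.d2 A' B'))

lemma imp_mono {A A' B B' : Formula σ} (h1 : Q (A'.imp A)) (h2 : Q (B.imp B')) :
    Q ((A.imp B).imp (A'.imp B')) := by
  -- first: (A→B) → (A'→B)
  have s1 : Q ((A.imp B).imp (A'.imp (A.imp B))) := QBKext.i1 _ _
  have s2 : Q ((A'.imp (A.imp B)).imp ((A'.imp A).imp (A'.imp B))) := QBKext.i2 _ _ _
  have s3 : Q ((A.imp B).imp (A'.imp B)) := mp2 (trans s1 s2) h1
  -- second: (A'→B) → (A'→B')
  have s4 : Q ((A'.imp B).imp (A'.imp B')) :=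
    (QBKext.i2 A' B B').mp ((QBKext.i1 _ _).mp h2)
  exact trans s3 s4

lemma imp_cong {A A' B B' : Formula σ} (h1 : Q (A.fiff A')) (h2 : Q (B.fiff B')) :
    Q ((A.imp B).fiff (A'.imp B')) :=
  fiff_intro (imp_mono (fiff_mp2 h1) (fiff_mp1 h2)) (imp_mono (fiff_mp1 h1) (fiff_mp2 h2))

lemma and_cong {A A' B B' : Formula σ} (h1 : Q (A.fiff A')) (h2 : Q (B.fiff B')) :
    Q ((A.and B).fiff (A'.and B')) :=
  fiff_intro (and_mono (fiff_mp1 h1) (fiff_mp1 h2)) (and_mono (fiff_mp2 h1) (fiff_mp2 h2))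

lemma or_cong {A A' B B' : Formula σ} (h1 : Q (A.fiff A')) (h2 : Q (B.fiff B')) :
    Q ((A.or B).fiff (A'.or B')) :=
  fiff_intro (or_mono (fiff_mp1 h1) (fiff_mp1 h2)) (or_mono (fiff_mp2 h1) (fiff_mp2 h2))

lemma box_cong {A B : Formula σ} (h : Q (A.fiff B)) : Q (A.box.fiff B.box) :=
  fiff_intro (QBKext.mb (fiff_mp1 h)) (QBKext.mb (fiff_mp2 h))

lemma dia_cong {A B : Formula σ} (h : Q (A.fiff B)) : Q (A.dia.fiff B.dia) :=
  fiff_intro (QBKext.md (fiff_mp1 h)) (QBKext.md (fiff_mp2 h))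

lemma substT_self (x : ℕ) (t : Term σ) : Term.substT x t (Term.var x) = t := by
  simp [Term.substT]

lemma subst_self (x : ℕ) (A : Formula σ) : A.subst x (Term.var x) = A := by
  induction A with
  | atom P ts =>
    rw [Formula.subst]; congr 1; funext i; exact substT_self x (ts i)
  | bot => rfl
  | imp A B ihA ihB => simp [Formula.subst, ihA, ihB]
  | and A B ihA ihB => simp [Formula.subst, ihA, ihB]
  | or A B ihA ihB => simp [Formula.subst, ihA, ihB]
  | snot A ih => simp [Formula.subst, ih]
  | box A ih => simp [Formula.subst, ih]
  | dia A ih => simp [Formula.subst, ih]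
  | all y A ih => simp [Formula.subst, ih]
  | ex y A ih => simp [Formula.subst, ih]

lemma freeFor_var (x : ℕ) (A : Formula σ) : FreeFor x (Term.var x) A := by
  induction A with
  | atom P ts => trivial
  | bot => trivial
  | imp A B ihA ihB => exact ⟨ihA, ihB⟩
  | and A B ihA ihB => exact ⟨ihA, ihB⟩
  | or A B ihA ihB => exact ⟨ihA, ihB⟩
  | snot A ih => exact ih
  | box A ih => exact ih
  | dia A ih => exact ih
  | all y A ih =>
    by_cases hxy : y = x
    · left; subst hxy; simp [Formula.fv]
    · right; exact ⟨by simpa [Term.fv] using hxy, ih⟩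
  | ex y A ih =>
    by_cases hxy : y = x
    · left; subst hxy; simp [Formula.fv]
    · right; exact ⟨by simpa [Term.fv] using hxy, ih⟩

lemma all_mono {A B : Formula σ} (x : ℕ) (h : Q (A.imp B)) :
    Q ((Formula.all x A).imp (Formula.all x B)) := by
  have h1 : Q ((Formula.all x A).imp A) := by
    have := QBKext.q1 (Ex := fun _ => False) (freeFor_var x A)
    rwa [subst_self] at this
  exact QBKext.br1 (trans h1 h) (by simp [Formula.fv])

lemma ex_mono {A B : Formula σ} (x : ℕ) (h : Q (A.imp B)) :
    Q ((Formula.ex x A).imp (Formula.ex x B)) := by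
  have h1 : Q (B.imp (Formula.ex x B)) := by
    have := QBKext.q2 (Ex := fun _ => False) (freeFor_var x B)
    rwa [subst_self] at this
  exact QBKext.br2 (trans h h1) (by simp [Formula.fv])

lemma all_cong {A B : Formula σ} (x : ℕ) (h : Q (A.fiff B)) :
    Q ((Formula.all x A).fiff (Formula.all x B)) :=
  fiff_intro (all_mono x (fiff_mp1 h)) (all_mono x (fiff_mp2 h))

lemma ex_cong {A B : Formula σ} (x : ℕ) (h : Q (A.fiff B)) :
    Q ((Formula.ex x A).fiff (Formula.ex x B)) :=
  fiff_intro (ex_mono x (fiff_mp1 h)) (ex_mono x (fiff_mp2 h))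

end PosRepl

/-- **Positive replacement rule**: if Φ↔Ψ ∈ QBK_σ and Θ contains no strong negation, then
Θ ↔ Θ(Φ/Ψ) ∈ QBK_σ. -/
theorem positive_replacement (σ : Sig) (Φ Ψ Θ : Formula σ)
    (h : QBK σ (Φ.fiff Ψ)) (hΘ : NegFree Θ) :
    QBK σ (Θ.fiff (Formula.replace Φ Ψ Θ)) := by
  induction Θ with
  | atom P ts =>
    rw [Formula.replace]
    split
    · rename_i he; exact he ▸ h
    · exact PosRepl.fiff_refl _
  | bot =>
    rw [Formula.replace]
    split
    · rename_i he; exact he ▸ h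
    · exact PosRepl.fiff_refl _
  | imp A B ihA ihB =>
    rw [Formula.replace]
    split
    · rename_i he; exact he ▸ h
    · exact PosRepl.imp_cong (ihA hΘ.1) (ihB hΘ.2)
  | and A B ihA ihB =>
    rw [Formula.replace]
    split
    · rename_i he; exact he ▸ h
    · exact PosRepl.and_cong (ihA hΘ.1) (ihB hΘ.2)
  | or A B ihA ihB =>
    rw [Formula.replace]
    split
    · rename_i he; exact he ▸ h
    · exact PosRepl.or_cong (ihA hΘ.1) (ihB hΘ.2)
  | snot A ih => exact absurd hΘ (by simp [NegFree])
  | box A ih =>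
    rw [Formula.replace]
    split
    · rename_i he; exact he ▸ h
    · exact PosRepl.box_cong (ih hΘ)
  | dia A ih =>
    rw [Formula.replace]
    split
    · rename_i he; exact he ▸ h
    · exact PosRepl.dia_cong (ih hΘ)
  | all x A ih =>
    rw [Formula.replace]
    split
    · rename_i he; exact he ▸ h
    · exact PosRepl.all_cong x (ih hΘ)
  | ex x A ih =>
    rw [Formula.replace]
    split
    · rename_i he; exact he ▸ h
    · exact PosRepl.ex_cong x (ih hΘ)
end

section
/- Weak replacement rule: if Φ ⇔ Ψ ∈ QBK_σ, then for every σ-formula Θ one has Θ ⇔ Θ(Φ/Ψ) ∈ QBK_σ, where Θ(Φ/Ψ) is the result of simultaneously replacing all occurrences of the subformula Φ in Θ by Ψ. -/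
namespace WR

variable {σ : Sig} {Ex : Formula σ → Prop}

local notation "⊢" A => QBKext σ Ex A

lemma trans' {A B C : Formula σ} (h1 : ⊢ A.imp B) (h2 : ⊢ B.imp C) : ⊢ A.imp C :=
  QBKext.mp (QBKext.mp (QBKext.i2 A B C) (QBKext.mp (QBKext.i1 (B.imp C) A) h2)) h1

lemma mpu {X Y Z : Formula σ} (h : ⊢ Y.imp (X.imp Z)) (hx : ⊢ X) : ⊢ Y.imp Z :=
  QBKext.mp (QBKext.mp (QBKext.i2 Y X Z) h) (QBKext.mp (QBKext.i1 X Y) hx)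

lemma iid (A : Formula σ) : ⊢ A.imp A :=
  QBKext.mp (QBKext.mp (QBKext.i2 A (A.imp A) A) (QBKext.i1 A (A.imp A))) (QBKext.i1 A A)

lemma and_intro {A B : Formula σ} (hA : ⊢ A) (hB : ⊢ B) : ⊢ A.and B :=
  QBKext.mp (QBKext.mp (QBKext.c3 A B) hA) hB

lemma imp_and {C A B : Formula σ} (h1 : ⊢ C.imp A) (h2 : ⊢ C.imp B) : ⊢ C.imp (A.and B) :=
  QBKext.mp (QBKext.mp (QBKext.i2 C B (A.and B)) (trans' h1 (QBKext.c3 A B))) h2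

lemma imp_mono {A A' B B' : Formula σ} (hA : ⊢ A'.imp A) (hB : ⊢ B.imp B') :
    ⊢ (A.imp B).imp (A'.imp B') := by
  have post : ⊢ (A.imp B).imp (A.imp B') :=
    QBKext.mp (trans' (QBKext.i1 (B.imp B') A) (QBKext.i2 A B B')) hB
  have pre : ⊢ (A.imp B').imp (A'.imp B') :=
    mpu (trans' (QBKext.i1 (A.imp B') A') (QBKext.i2 A' A B')) hA
  exact trans' post pre

lemma and_mono {A A' B B' : Formula σ} (hA : ⊢ A.imp A') (hB : ⊢ B.imp B') :
    ⊢ (A.and B).imp (A'.and B') :=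
  imp_and (trans' (QBKext.c1 A B) hA) (trans' (QBKext.c2 A B) hB)

lemma or_mono {A A' B B' : Formula σ} (hA : ⊢ A.imp A') (hB : ⊢ B.imp B') :
    ⊢ (A.or B).imp (A'.or B') :=
  QBKext.mp (QBKext.mp (QBKext.d3 A B (A'.or B')) (trans' hA (QBKext.d1 A' B')))
    (trans' hB (QBKext.d2 A' B'))

lemma fiff_of {A B : Formula σ} (h1 : ⊢ A.imp B) (h2 : ⊢ B.imp A) : ⊢ A.fiff B :=
  and_intro h1 h2

lemma fiff_mp1 {A B : Formula σ} (h : ⊢ A.fiff B) : ⊢ A.imp B :=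
  QBKext.mp (QBKext.c1 _ _) h

lemma fiff_mp2 {A B : Formula σ} (h : ⊢ A.fiff B) : ⊢ B.imp A :=
  QBKext.mp (QBKext.c2 _ _) h

lemma fiff_refl (A : Formula σ) : ⊢ A.fiff A := fiff_of (iid A) (iid A)

lemma fiff_symm {A B : Formula σ} (h : ⊢ A.fiff B) : ⊢ B.fiff A :=
  fiff_of (fiff_mp2 h) (fiff_mp1 h)

lemma fiff_trans {A B C : Formula σ} (h1 : ⊢ A.fiff B) (h2 : ⊢ B.fiff C) : ⊢ A.fiff C :=
  fiff_of (trans' (fiff_mp1 h1) (fiff_mp1 h2)) (trans' (fiff_mp2 h2) (fiff_mp2 h1))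

lemma fiff_imp_cong {A A' B B' : Formula σ} (hA : ⊢ A.fiff A') (hB : ⊢ B.fiff B') :
    ⊢ (A.imp B).fiff (A'.imp B') :=
  fiff_of (imp_mono (fiff_mp2 hA) (fiff_mp1 hB)) (imp_mono (fiff_mp1 hA) (fiff_mp2 hB))

lemma fiff_and_cong {A A' B B' : Formula σ} (hA : ⊢ A.fiff A') (hB : ⊢ B.fiff B') :
    ⊢ (A.and B).fiff (A'.and B') :=
  fiff_of (and_mono (fiff_mp1 hA) (fiff_mp1 hB)) (and_mono (fiff_mp2 hA) (fiff_mp2 hB))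

lemma fiff_or_cong {A A' B B' : Formula σ} (hA : ⊢ A.fiff A') (hB : ⊢ B.fiff B') :
    ⊢ (A.or B).fiff (A'.or B') :=
  fiff_of (or_mono (fiff_mp1 hA) (fiff_mp1 hB)) (or_mono (fiff_mp2 hA) (fiff_mp2 hB))

lemma siff_f {A B : Formula σ} (h : ⊢ A.siff B) : ⊢ A.fiff B :=
  QBKext.mp (QBKext.c1 _ _) h

lemma siff_n {A B : Formula σ} (h : ⊢ A.siff B) : ⊢ A.snot.fiff B.snot :=
  QBKext.mp (QBKext.c2 _ _) h

lemma siff_of {A B : Formula σ} (h1 : ⊢ A.fiff B) (h2 : ⊢ A.snot.fiff B.snot) : ⊢ A.siff B :=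
  and_intro h1 h2

lemma siff_refl (A : Formula σ) : ⊢ A.siff A := siff_of (fiff_refl A) (fiff_refl _)

lemma siff_imp_cong {A A' B B' : Formula σ} (hA : ⊢ A.siff A') (hB : ⊢ B.siff B') :
    ⊢ (A.imp B).siff (A'.imp B') :=
  siff_of (fiff_imp_cong (siff_f hA) (siff_f hB))
    (fiff_trans (QBKext.sn2 A B)
      (fiff_trans (fiff_and_cong (siff_f hA) (siff_n hB)) (fiff_symm (QBKext.sn2 A' B'))))

lemma siff_and_cong {A A' B B' : Formula σ} (hA : ⊢ A.siff A') (hB : ⊢ B.siff B') :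
    ⊢ (A.and B).siff (A'.and B') :=
  siff_of (fiff_and_cong (siff_f hA) (siff_f hB))
    (fiff_trans (QBKext.sn4 A B)
      (fiff_trans (fiff_or_cong (siff_n hA) (siff_n hB)) (fiff_symm (QBKext.sn4 A' B'))))

lemma siff_or_cong {A A' B B' : Formula σ} (hA : ⊢ A.siff A') (hB : ⊢ B.siff B') :
    ⊢ (A.or B).siff (A'.or B') :=
  siff_of (fiff_or_cong (siff_f hA) (siff_f hB))
    (fiff_trans (QBKext.sn3 A B)
      (fiff_trans (fiff_and_cong (siff_n hA) (siff_n hB)) (fiff_symm (QBKext.sn3 A' B'))))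

lemma siff_snot_cong {A A' : Formula σ} (hA : ⊢ A.siff A') : ⊢ A.snot.siff A'.snot :=
  siff_of (siff_n hA)
    (fiff_trans (QBKext.sn1 A) (fiff_trans (siff_f hA) (fiff_symm (QBKext.sn1 A'))))

lemma snot_box_fiff (A : Formula σ) : ⊢ A.box.snot.fiff A.snot.dia :=
  fiff_trans (siff_n (QBKext.m3 A)) (QBKext.sn1 A.snot.dia)

lemma snot_dia_fiff (A : Formula σ) : ⊢ A.dia.snot.fiff A.snot.box :=
  fiff_trans (siff_n (QBKext.m4 A)) (QBKext.sn1 A.snot.box)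

lemma siff_box_cong {A A' : Formula σ} (hA : ⊢ A.siff A') : ⊢ A.box.siff A'.box :=
  siff_of
    (fiff_of (QBKext.mb (fiff_mp1 (siff_f hA))) (QBKext.mb (fiff_mp2 (siff_f hA))))
    (fiff_trans (snot_box_fiff A)
      (fiff_trans
        (fiff_of (QBKext.md (fiff_mp1 (siff_n hA))) (QBKext.md (fiff_mp2 (siff_n hA))))
        (fiff_symm (snot_box_fiff A'))))

lemma siff_dia_cong {A A' : Formula σ} (hA : ⊢ A.siff A') : ⊢ A.dia.siff A'.dia :=
  siff_of
    (fiff_of (QBKext.md (fiff_mp1 (siff_f hA))) (QBKext.md (fiff_mp2 (siff_f hA))))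
    (fiff_trans (snot_dia_fiff A)
      (fiff_trans
        (fiff_of (QBKext.mb (fiff_mp1 (siff_n hA))) (QBKext.mb (fiff_mp2 (siff_n hA))))
        (fiff_symm (snot_dia_fiff A'))))

lemma substT_var (x : ℕ) (t : Term σ) : Term.substT x t (.var x) = t := by
  simp [Term.substT]

lemma subst_var (x : ℕ) (A : Formula σ) : A.subst x (.var x) = A := by
  induction A with
  | atom P ts => simp only [Formula.subst]; congr 1; funext i; exact substT_var x (ts i)
  | bot => rfl
  | imp A B ihA ihB => simp [Formula.subst, ihA, ihB]
  | and A B ihA ihB => simp [Formula.subst, ihA, ihB]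
  | or A B ihA ihB => simp [Formula.subst, ihA, ihB]
  | snot A ih => simp [Formula.subst, ih]
  | box A ih => simp [Formula.subst, ih]
  | dia A ih => simp [Formula.subst, ih]
  | all y A ih => simp [Formula.subst, ih]
  | ex y A ih => simp [Formula.subst, ih]

lemma freeFor_var (x : ℕ) (A : Formula σ) : FreeFor x (.var x : Term σ) A := by
  induction A with
  | atom P ts => trivial
  | bot => trivial
  | imp A B ihA ihB => exact ⟨ihA, ihB⟩
  | and A B ihA ihB => exact ⟨ihA, ihB⟩
  | or A B ihA ihB => exact ⟨ihA, ihB⟩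
  | snot A ih => exact ih
  | box A ih => exact ih
  | dia A ih => exact ih
  | all y A ih =>
    by_cases h : y = x
    · subst h; exact Or.inl (Finset.notMem_erase _ _)
    · exact Or.inr ⟨by simp [Term.fv, h], ih⟩
  | ex y A ih =>
    by_cases h : y = x
    · subst h; exact Or.inl (Finset.notMem_erase _ _)
    · exact Or.inr ⟨by simp [Term.fv, h], ih⟩

lemma all_elim (x : ℕ) (A : Formula σ) : ⊢ (Formula.all x A).imp A := by
  have := QBKext.q1 (σ := σ) (Ex := Ex) (freeFor_var x A)
  rwa [subst_var] at this

lemma ex_intro (x : ℕ) (A : Formula σ) : ⊢ A.imp (Formula.ex x A) := by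
  have := QBKext.q2 (σ := σ) (Ex := Ex) (freeFor_var x A)
  rwa [subst_var] at this

lemma all_mono {A B : Formula σ} (x : ℕ) (h : ⊢ A.imp B) :
    ⊢ (Formula.all x A).imp (Formula.all x B) :=
  QBKext.br1 (trans' (all_elim x A) h) (Finset.notMem_erase x _)

lemma ex_mono {A B : Formula σ} (x : ℕ) (h : ⊢ A.imp B) :
    ⊢ (Formula.ex x A).imp (Formula.ex x B) :=
  QBKext.br2 (trans' h (ex_intro x B)) (Finset.notMem_erase x _)

lemma siff_all_cong {A A' : Formula σ} (x : ℕ) (hA : ⊢ A.siff A') :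
    ⊢ (Formula.all x A).siff (Formula.all x A') :=
  siff_of
    (fiff_of (all_mono x (fiff_mp1 (siff_f hA))) (all_mono x (fiff_mp2 (siff_f hA))))
    (fiff_trans (QBKext.q3 x A)
      (fiff_trans
        (fiff_of (ex_mono x (fiff_mp1 (siff_n hA))) (ex_mono x (fiff_mp2 (siff_n hA))))
        (fiff_symm (QBKext.q3 x A'))))

lemma siff_ex_cong {A A' : Formula σ} (x : ℕ) (hA : ⊢ A.siff A') :
    ⊢ (Formula.ex x A).siff (Formula.ex x A') :=
  siff_of
    (fiff_of (ex_mono x (fiff_mp1 (siff_f hA))) (ex_mono x (fiff_mp2 (siff_f hA))))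
    (fiff_trans (QBKext.q4 x A)
      (fiff_trans
        (fiff_of (all_mono x (fiff_mp1 (siff_n hA))) (all_mono x (fiff_mp2 (siff_n hA))))
        (fiff_symm (QBKext.q4 x A'))))

end WR

/-- **Weak replacement rule**: if Φ ⇔ Ψ ∈ QBK_σ then Θ ⇔ Θ(Φ/Ψ) ∈ QBK_σ for every Θ. -/
theorem weak_replacement (σ : Sig) (Φ Ψ Θ : Formula σ) (h : QBK σ (Φ.siff Ψ)) :
    QBK σ (Θ.siff (Formula.replace Φ Ψ Θ)) := by
  open WR in
  induction Θ with
  | atom P ts =>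
    rw [Formula.replace]; split
    · next heq => rw [heq]; exact h
    · exact siff_refl _
  | bot =>
    rw [Formula.replace]; split
    · next heq => rw [heq]; exact h
    · exact siff_refl _
  | imp A B ihA ihB =>
    rw [Formula.replace]; split
    · next heq => rw [heq]; exact h
    · exact siff_imp_cong ihA ihB
  | and A B ihA ihB =>
    rw [Formula.replace]; split
    · next heq => rw [heq]; exact h
    · exact siff_and_cong ihA ihB
  | or A B ihA ihB =>
    rw [Formula.replace]; split
    · next heq => rw [heq]; exact h
    · exact siff_or_cong ihA ihB
  | snot A ih =>
    rw [Formula.replace]; split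
    · next heq => rw [heq]; exact h
    · exact siff_snot_cong ih
  | box A ih =>
    rw [Formula.replace]; split
    · next heq => rw [heq]; exact h
    · exact siff_box_cong ih
  | dia A ih =>
    rw [Formula.replace]; split
    · next heq => rw [heq]; exact h
    · exact siff_dia_cong ih
  | all x A ih =>
    rw [Formula.replace]; split
    · next heq => rw [heq]; exact h
    · exact siff_all_cong x ih
  | ex x A ih =>
    rw [Formula.replace]; split
    · next heq => rw [heq]; exact h
    · exact siff_ex_cong x ih
end

section
/- Strong equivalence of certain axioms: for all σ-formulas Φ, Ψ and every variable x, the following strong equivalences belong to QBK_σ: ∼∼Φ ⇔ Φ; ∼(Φ∨Ψ) ⇔ (∼Φ∧∼Ψ); ∼(Φ∧Ψ) ⇔ (∼Φ∨∼Ψ); ∼∀xΦ ⇔ ∃x∼Φ; ∼∃xΦ ⇔ ∀x∼Φ; ¬□Φ ⇔ ◇¬Φ; ¬◇Φ ⇔ □¬Φ. -/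
section Helpers

variable {σ : Sig} {Ex : Formula σ → Prop}

open Formula QBKext

local notation "T" => QBKext σ Ex

lemma thm_id (A : Formula σ) : T (A.imp A) :=
  mp (mp (i2 A (A.imp A) A) (i1 A (A.imp A))) (i1 A A)

lemma imp_of_thm {A B : Formula σ} (h : T B) : T (A.imp B) := mp (i1 B A) h

lemma comp' {A B C : Formula σ} (h1 : T (A.imp B)) (h2 : T (B.imp C)) : T (A.imp C) :=
  mp (mp (i2 A B C) (imp_of_thm h2)) h1

lemma andI' {A B : Formula σ} (h1 : T A) (h2 : T B) : T (A.and B) :=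
  mp (mp (c3 A B) h1) h2

lemma pair' {X A B : Formula σ} (h1 : T (X.imp A)) (h2 : T (X.imp B)) :
    T (X.imp (A.and B)) :=
  mp (mp (i2 X B (A.and B)) (comp' h1 (c3 A B))) h2

lemma fiff1 {A B : Formula σ} (h : T (A.fiff B)) : T (A.imp B) := mp (c1 _ _) h
lemma fiff2 {A B : Formula σ} (h : T (A.fiff B)) : T (B.imp A) := mp (c2 _ _) h

lemma fiffI {A B : Formula σ} (h1 : T (A.imp B)) (h2 : T (B.imp A)) : T (A.fiff B) :=
  andI' h1 h2

lemma fiff_symm {A B : Formula σ} (h : T (A.fiff B)) : T (B.fiff A) :=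
  fiffI (fiff2 h) (fiff1 h)

lemma fiff_trans {A B C : Formula σ} (h1 : T (A.fiff B)) (h2 : T (B.fiff C)) :
    T (A.fiff C) :=
  fiffI (comp' (fiff1 h1) (fiff1 h2)) (comp' (fiff2 h2) (fiff2 h1))

lemma or_cong {A B C D : Formula σ} (h1 : T (A.imp B)) (h2 : T (C.imp D)) :
    T ((A.or C).imp (B.or D)) :=
  mp (mp (d3 A C (B.or D)) (comp' h1 (d1 B D))) (comp' h2 (d2 B D))

lemma and_cong {A B C D : Formula σ} (h1 : T (A.imp B)) (h2 : T (C.imp D)) :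
    T ((A.and C).imp (B.and D)) :=
  pair' (comp' (c1 A C) h1) (comp' (c2 A C) h2)

lemma or_fiff {A B C D : Formula σ} (h1 : T (A.fiff B)) (h2 : T (C.fiff D)) :
    T ((A.or C).fiff (B.or D)) :=
  fiffI (or_cong (fiff1 h1) (fiff1 h2)) (or_cong (fiff2 h1) (fiff2 h2))

lemma and_fiff {A B C D : Formula σ} (h1 : T (A.fiff B)) (h2 : T (C.fiff D)) :
    T ((A.and C).fiff (B.and D)) :=
  fiffI (and_cong (fiff1 h1) (fiff1 h2)) (and_cong (fiff2 h1) (fiff2 h2))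

lemma box_fiff {A B : Formula σ} (h : T (A.fiff B)) : T (A.box.fiff B.box) :=
  fiffI (mb (fiff1 h)) (mb (fiff2 h))

lemma dia_fiff {A B : Formula σ} (h : T (A.fiff B)) : T (A.dia.fiff B.dia) :=
  fiffI (md (fiff1 h)) (md (fiff2 h))

lemma Formula.subst_var_self {σ : Sig} (x : ℕ) (A : Formula σ) :
    A.subst x (.var x) = A := by
  induction A with
  | atom P ts =>
      simp [Formula.subst, Term.substT]
  | bot => rfl
  | imp A B ihA ihB => simp [Formula.subst, ihA, ihB]
  | and A B ihA ihB => simp [Formula.subst, ihA, ihB]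
  | or A B ihA ihB => simp [Formula.subst, ihA, ihB]
  | snot A ih => simp [Formula.subst, ih]
  | box A ih => simp [Formula.subst, ih]
  | dia A ih => simp [Formula.subst, ih]
  | all y A ih => simp only [Formula.subst]; split <;> simp [ih]
  | ex y A ih => simp only [Formula.subst]; split <;> simp [ih]

lemma freeFor_var_self {σ : Sig} (x : ℕ) (A : Formula σ) :
    FreeFor x (Term.var x : Term σ) A := by
  induction A with
  | atom P ts => trivial
  | bot => trivial
  | imp A B ihA ihB => exact ⟨ihA, ihB⟩
  | and A B ihA ihB => exact ⟨ihA, ihB⟩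
  | or A B ihA ihB => exact ⟨ihA, ihB⟩
  | snot A ih => exact ih
  | box A ih => exact ih
  | dia A ih => exact ih
  | all y A ih =>
      by_cases h : y = x
      · left; subst h; simp [Formula.fv]
      · right; exact ⟨by simp [Term.fv, h], ih⟩
  | ex y A ih =>
      by_cases h : y = x
      · left; subst h; simp [Formula.fv]
      · right; exact ⟨by simp [Term.fv, h], ih⟩

lemma all_cong {A B : Formula σ} (y : ℕ) (h : T (A.imp B)) :
    T ((Formula.all y A).imp (Formula.all y B)) := by
  have h1 : T ((Formula.all y A).imp A) := by
    have := q1 (Ex := Ex) (freeFor_var_self y A)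
    rwa [Formula.subst_var_self] at this
  exact br1 (comp' h1 h) (by simp [Formula.fv])

lemma ex_cong {A B : Formula σ} (y : ℕ) (h : T (A.imp B)) :
    T ((Formula.ex y A).imp (Formula.ex y B)) := by
  have h1 : T (B.imp (Formula.ex y B)) := by
    have := q2 (Ex := Ex) (freeFor_var_self y B)
    rwa [Formula.subst_var_self] at this
  exact br2 (comp' h h1) (by simp [Formula.fv])

lemma all_fiff {A B : Formula σ} (y : ℕ) (h : T (A.fiff B)) :
    T ((Formula.all y A).fiff (Formula.all y B)) :=
  fiffI (all_cong y (fiff1 h)) (all_cong y (fiff2 h))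

lemma ex_fiff {A B : Formula σ} (y : ℕ) (h : T (A.fiff B)) :
    T ((Formula.ex y A).fiff (Formula.ex y B)) :=
  fiffI (ex_cong y (fiff1 h)) (ex_cong y (fiff2 h))

/-- A ∧ ∼⊥ ↔ A -/
lemma and_snotbot_fiff (A : Formula σ) : T ((A.and Formula.bot.snot).fiff A) :=
  fiffI (c1 _ _) (pair' (thm_id A) (imp_of_thm sn5))

/-- ∼¬A ↔ A -/
lemma snot_neg_fiff (A : Formula σ) : T (A.neg.snot.fiff A) :=
  fiff_trans (sn2 A .bot) (and_snotbot_fiff A)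

/-- siff's components -/
lemma siff1 {A B : Formula σ} (h : T (A.siff B)) : T (A.fiff B) := mp (c1 _ _) h
lemma siff2 {A B : Formula σ} (h : T (A.siff B)) : T (A.snot.fiff B.snot) := mp (c2 _ _) h

end Helpers

/-- **Strong equivalence of certain axioms**: ∼∼Φ ⇔ Φ; ∼(Φ∨Ψ) ⇔ (∼Φ∧∼Ψ);
∼(Φ∧Ψ) ⇔ (∼Φ∨∼Ψ); ∼∀xΦ ⇔ ∃x∼Φ; ∼∃xΦ ⇔ ∀x∼Φ; ¬□Φ ⇔ ◇¬Φ; ¬◇Φ ⇔ □¬Φ, all in QBK_σ. -/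
theorem strong_equivalence_of_axioms (σ : Sig) (Φ Ψ : Formula σ) (x : ℕ) :
    QBK σ (Φ.snot.snot.siff Φ) ∧
    QBK σ ((Φ.or Ψ).snot.siff (Φ.snot.and Ψ.snot)) ∧
    QBK σ ((Φ.and Ψ).snot.siff (Φ.snot.or Ψ.snot)) ∧
    QBK σ ((Formula.all x Φ).snot.siff (Formula.ex x Φ.snot)) ∧
    QBK σ ((Formula.ex x Φ).snot.siff (Formula.all x Φ.snot)) ∧
    QBK σ (Φ.box.neg.siff Φ.neg.dia) ∧
    QBK σ (Φ.dia.neg.siff Φ.neg.box) := by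
  open QBKext in
  refine ⟨?_, ?_, ?_, ?_, ?_, ?_, ?_⟩
  · exact andI' (sn1 Φ) (sn1 Φ.snot)
  · exact andI' (sn3 Φ Ψ)
      (fiff_trans (sn1 (Φ.or Ψ))
        (fiff_trans (or_fiff (fiff_symm (sn1 Φ)) (fiff_symm (sn1 Ψ)))
          (fiff_symm (sn4 Φ.snot Ψ.snot))))
  · exact andI' (sn4 Φ Ψ)
      (fiff_trans (sn1 (Φ.and Ψ))
        (fiff_trans (and_fiff (fiff_symm (sn1 Φ)) (fiff_symm (sn1 Ψ)))
          (fiff_symm (sn3 Φ.snot Ψ.snot))))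
  · exact andI' (q3 x Φ)
      (fiff_trans (sn1 (Formula.all x Φ))
        (fiff_trans (all_fiff x (fiff_symm (sn1 Φ)))
          (fiff_symm (q4 x Φ.snot))))
  · exact andI' (q4 x Φ)
      (fiff_trans (sn1 (Formula.ex x Φ))
        (fiff_trans (ex_fiff x (fiff_symm (sn1 Φ)))
          (fiff_symm (q3 x Φ.snot))))
  · refine andI' (m1 Φ) ?_
    -- ∼¬□Φ ↔ □Φ ↔ □∼¬Φ ↔ ∼∼□∼¬Φ ↔ ∼◇¬Φ
    refine fiff_trans (snot_neg_fiff Φ.box) ?_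
    refine fiff_trans (box_fiff (fiff_symm (snot_neg_fiff Φ))) ?_
    refine fiff_trans (fiff_symm (sn1 Φ.neg.snot.box)) ?_
    exact fiff_symm (siff2 (m4 Φ.neg))
  · refine andI' (m2 Φ) ?_
    refine fiff_trans (snot_neg_fiff Φ.dia) ?_
    refine fiff_trans (dia_fiff (fiff_symm (snot_neg_fiff Φ))) ?_
    refine fiff_trans (fiff_symm (sn1 Φ.neg.snot.dia)) ?_
    exact fiff_symm (siff2 (m3 Φ.neg))
end

section
/- Negative normal form theorem: for every σ-formula Φ there exists a σ-formula Φ̄ in negative normal form (i.e. the strong negation ∼ occurs in Φ̄ only immediately in front of atomic formulas or in front of ⊥) such that Φ ⇔ Φ̄ belongs to QBK_σ. -/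
namespace NNFAux

variable {σ : Sig} {Ex : Formula σ → Prop}

/-! Basic Hilbert lemmas -/

theorem pp (A : Formula σ) : QBKext σ Ex (A.imp A) :=
  QBKext.mp (QBKext.mp (QBKext.i2 A (A.imp A) A) (QBKext.i1 A (A.imp A))) (QBKext.i1 A A)

theorem comp {A B C : Formula σ} (h1 : QBKext σ Ex (A.imp B)) (h2 : QBKext σ Ex (B.imp C)) :
    QBKext σ Ex (A.imp C) :=
  QBKext.mp (QBKext.mp (QBKext.i2 A B C) (QBKext.mp (QBKext.i1 _ _) h2)) h1

theorem swap {A B C : Formula σ} (h : QBKext σ Ex (A.imp (B.imp C))) :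
    QBKext σ Ex (B.imp (A.imp C)) :=
  comp (QBKext.i1 B A) (QBKext.mp (QBKext.i2 A B C) h)

theorem andI {A B : Formula σ} (h1 : QBKext σ Ex A) (h2 : QBKext σ Ex B) :
    QBKext σ Ex (A.and B) :=
  QBKext.mp (QBKext.mp (QBKext.c3 A B) h1) h2

theorem andE1 {A B : Formula σ} (h : QBKext σ Ex (A.and B)) : QBKext σ Ex A :=
  QBKext.mp (QBKext.c1 A B) h

theorem andE2 {A B : Formula σ} (h : QBKext σ Ex (A.and B)) : QBKext σ Ex B :=
  QBKext.mp (QBKext.c2 A B) h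

theorem imp_r {A B C : Formula σ} (h : QBKext σ Ex (B.imp C)) :
    QBKext σ Ex ((A.imp B).imp (A.imp C)) :=
  QBKext.mp (QBKext.i2 A B C) (QBKext.mp (QBKext.i1 _ _) h)

theorem imp_l {A A' B : Formula σ} (h : QBKext σ Ex (A'.imp A)) :
    QBKext σ Ex ((A.imp B).imp (A'.imp B)) :=
  swap (comp h (swap (pp (A.imp B))))

theorem imp_mono {A A' B B' : Formula σ} (hA : QBKext σ Ex (A'.imp A))
    (hB : QBKext σ Ex (B.imp B')) : QBKext σ Ex ((A.imp B).imp (A'.imp B')) :=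
  comp (imp_l hA) (imp_r hB)

theorem andD {X Y Z : Formula σ} (h1 : QBKext σ Ex (X.imp Y)) (h2 : QBKext σ Ex (X.imp Z)) :
    QBKext σ Ex (X.imp (Y.and Z)) :=
  QBKext.mp (QBKext.mp (QBKext.i2 X Z (Y.and Z)) (comp h1 (QBKext.c3 Y Z))) h2

theorem and_mono {A A' B B' : Formula σ} (hA : QBKext σ Ex (A.imp A'))
    (hB : QBKext σ Ex (B.imp B')) : QBKext σ Ex ((A.and B).imp (A'.and B')) :=
  andD (comp (QBKext.c1 A B) hA) (comp (QBKext.c2 A B) hB)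

theorem or_mono {A A' B B' : Formula σ} (hA : QBKext σ Ex (A.imp A'))
    (hB : QBKext σ Ex (B.imp B')) : QBKext σ Ex ((A.or B).imp (A'.or B')) :=
  QBKext.mp (QBKext.mp (QBKext.d3 A B (A'.or B')) (comp hA (QBKext.d1 A' B')))
    (comp hB (QBKext.d2 A' B'))

/-! fiff lemmas -/

theorem fiff_refl (A : Formula σ) : QBKext σ Ex (A.fiff A) := andI (pp A) (pp A)

theorem fiff_symm {A B : Formula σ} (h : QBKext σ Ex (A.fiff B)) : QBKext σ Ex (B.fiff A) :=
  andI (andE2 h) (andE1 h)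

theorem fiff_trans {A B C : Formula σ} (h1 : QBKext σ Ex (A.fiff B))
    (h2 : QBKext σ Ex (B.fiff C)) : QBKext σ Ex (A.fiff C) :=
  andI (comp (andE1 h1) (andE1 h2)) (comp (andE2 h2) (andE2 h1))

theorem fiff_imp {A A' B B' : Formula σ} (h1 : QBKext σ Ex (A.fiff A'))
    (h2 : QBKext σ Ex (B.fiff B')) : QBKext σ Ex ((A.imp B).fiff (A'.imp B')) :=
  andI (imp_mono (andE2 h1) (andE1 h2)) (imp_mono (andE1 h1) (andE2 h2))

theorem fiff_and {A A' B B' : Formula σ} (h1 : QBKext σ Ex (A.fiff A'))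
    (h2 : QBKext σ Ex (B.fiff B')) : QBKext σ Ex ((A.and B).fiff (A'.and B')) :=
  andI (and_mono (andE1 h1) (andE1 h2)) (and_mono (andE2 h1) (andE2 h2))

theorem fiff_or {A A' B B' : Formula σ} (h1 : QBKext σ Ex (A.fiff A'))
    (h2 : QBKext σ Ex (B.fiff B')) : QBKext σ Ex ((A.or B).fiff (A'.or B')) :=
  andI (or_mono (andE1 h1) (andE1 h2)) (or_mono (andE2 h1) (andE2 h2))

theorem fiff_box {A B : Formula σ} (h : QBKext σ Ex (A.fiff B)) :
    QBKext σ Ex (A.box.fiff B.box) :=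
  andI (QBKext.mb (andE1 h)) (QBKext.mb (andE2 h))

theorem fiff_dia {A B : Formula σ} (h : QBKext σ Ex (A.fiff B)) :
    QBKext σ Ex (A.dia.fiff B.dia) :=
  andI (QBKext.md (andE1 h)) (QBKext.md (andE2 h))

/-! quantifier helpers -/

theorem substT_var_self {x : ℕ} (t : Term σ) : Term.substT x t (.var x) = t := by
  simp [Term.substT]

theorem subst_var_self {x : ℕ} (A : Formula σ) : A.subst x (.var x) = A := by
  induction A with
  | atom P ts => simp only [Formula.subst]; congr 1; funext i; exact substT_var_self _
  | bot => rfl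
  | imp A B ihA ihB => simp [Formula.subst, ihA, ihB]
  | and A B ihA ihB => simp [Formula.subst, ihA, ihB]
  | or A B ihA ihB => simp [Formula.subst, ihA, ihB]
  | snot A ih => simp [Formula.subst, ih]
  | box A ih => simp [Formula.subst, ih]
  | dia A ih => simp [Formula.subst, ih]
  | all y A ih => simp [Formula.subst, ih]
  | ex y A ih => simp [Formula.subst, ih]

theorem freeFor_var_self {x : ℕ} (A : Formula σ) : FreeFor x (Term.var x) A := by
  induction A with
  | atom P ts => trivial
  | bot => trivial
  | imp A B ihA ihB => exact ⟨ihA, ihB⟩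
  | and A B ihA ihB => exact ⟨ihA, ihB⟩
  | or A B ihA ihB => exact ⟨ihA, ihB⟩
  | snot A ih => exact ih
  | box A ih => exact ih
  | dia A ih => exact ih
  | all y A ih =>
    by_cases h : y = x
    · left; simp [Formula.fv, h]
    · right; exact ⟨by simpa [Term.fv] using h, ih⟩
  | ex y A ih =>
    by_cases h : y = x
    · left; simp [Formula.fv, h]
    · right; exact ⟨by simpa [Term.fv] using h, ih⟩

theorem all_elim_self {x : ℕ} (A : Formula σ) :
    QBKext σ Ex ((Formula.all x A).imp A) := by
  have h := QBKext.q1 (Ex := Ex) (freeFor_var_self (x := x) A)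
  rwa [subst_var_self] at h

theorem ex_intro_self {x : ℕ} (A : Formula σ) :
    QBKext σ Ex (A.imp (Formula.ex x A)) := by
  have h := QBKext.q2 (Ex := Ex) (freeFor_var_self (x := x) A)
  rwa [subst_var_self] at h

theorem all_mono {x : ℕ} {A B : Formula σ} (h : QBKext σ Ex (A.imp B)) :
    QBKext σ Ex ((Formula.all x A).imp (Formula.all x B)) :=
  QBKext.br1 (comp (all_elim_self A) h) (by simp [Formula.fv])

theorem ex_mono {x : ℕ} {A B : Formula σ} (h : QBKext σ Ex (A.imp B)) :
    QBKext σ Ex ((Formula.ex x A).imp (Formula.ex x B)) :=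
  QBKext.br2 (comp h (ex_intro_self B)) (by simp [Formula.fv])

theorem fiff_all {x : ℕ} {A B : Formula σ} (h : QBKext σ Ex (A.fiff B)) :
    QBKext σ Ex ((Formula.all x A).fiff (Formula.all x B)) :=
  andI (all_mono (andE1 h)) (all_mono (andE2 h))

theorem fiff_ex {x : ℕ} {A B : Formula σ} (h : QBKext σ Ex (A.fiff B)) :
    QBKext σ Ex ((Formula.ex x A).fiff (Formula.ex x B)) :=
  andI (ex_mono (andE1 h)) (ex_mono (andE2 h))

/-! classical negation lemmas -/

theorem a_nn (A : Formula σ) : QBKext σ Ex (A.imp A.neg.neg) :=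
  swap (pp A.neg)

theorem nn_a (A : Formula σ) : QBKext σ Ex (A.neg.neg.imp A) := by
  have h1 : QBKext σ Ex (A.imp (A.neg.neg.imp A)) := QBKext.i1 A A.neg.neg
  have h2 : QBKext σ Ex (A.neg.imp (A.neg.neg.imp Formula.bot)) := swap (pp A.neg.neg)
  have h2' : QBKext σ Ex (A.neg.imp (A.neg.neg.imp A)) := comp h2 (imp_r (QBKext.n2 A))
  exact QBKext.mp (QBKext.mp (QBKext.mp (QBKext.d3 A A.neg (A.neg.neg.imp A)) h1) h2')
    (QBKext.n1 A)

theorem fiff_nn (A : Formula σ) : QBKext σ Ex (A.fiff A.neg.neg) := andI (a_nn A) (nn_a A)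

/-- A → B classically equivalent to ¬A ∨ B. -/
theorem imp_iff_or (A B : Formula σ) : QBKext σ Ex ((A.imp B).fiff (A.neg.or B)) := by
  have fwd : QBKext σ Ex ((A.imp B).imp (A.neg.or B)) := by
    have hA : QBKext σ Ex ((A.imp B).imp (A.imp (A.neg.or B))) := imp_r (QBKext.d2 A.neg B)
    have hN : QBKext σ Ex (A.neg.imp (A.neg.or B)) := QBKext.d1 A.neg B
    have d := QBKext.d3 (Ex := Ex) A A.neg (A.neg.or B)
    have d' := QBKext.mp (swap d) hN
    exact QBKext.mp (swap (comp hA d')) (QBKext.n1 A)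
  have bwd : QBKext σ Ex ((A.neg.or B).imp (A.imp B)) :=
    QBKext.mp (QBKext.mp (QBKext.d3 A.neg B (A.imp B)) (imp_r (QBKext.n2 B)))
      (QBKext.i1 B A)
  exact andI fwd bwd

/-- ∼¬¬A ↔ ¬A -/
theorem snnn_iff (A : Formula σ) : QBKext σ Ex (A.neg.neg.snot.fiff A.neg) :=
  fiff_trans (QBKext.sn2 A.neg Formula.bot)
    (andI (QBKext.c1 _ _) (andD (pp A.neg) (QBKext.mp (QBKext.i1 _ _) QBKext.sn5)))

/-! siff lemmas -/

theorem siffI {A B : Formula σ} (h1 : QBKext σ Ex (A.fiff B))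
    (h2 : QBKext σ Ex (A.snot.fiff B.snot)) : QBKext σ Ex (A.siff B) := andI h1 h2

theorem s1 {A B : Formula σ} (h : QBKext σ Ex (A.siff B)) : QBKext σ Ex (A.fiff B) := andE1 h
theorem s2 {A B : Formula σ} (h : QBKext σ Ex (A.siff B)) :
    QBKext σ Ex (A.snot.fiff B.snot) := andE2 h

theorem siff_refl (A : Formula σ) : QBKext σ Ex (A.siff A) :=
  siffI (fiff_refl A) (fiff_refl A.snot)

theorem siff_trans {A B C : Formula σ} (h1 : QBKext σ Ex (A.siff B))
    (h2 : QBKext σ Ex (B.siff C)) : QBKext σ Ex (A.siff C) :=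
  siffI (fiff_trans (s1 h1) (s1 h2)) (fiff_trans (s2 h1) (s2 h2))

theorem siff_imp {A A' B B' : Formula σ} (h1 : QBKext σ Ex (A.siff A'))
    (h2 : QBKext σ Ex (B.siff B')) : QBKext σ Ex ((A.imp B).siff (A'.imp B')) :=
  siffI (fiff_imp (s1 h1) (s1 h2))
    (fiff_trans (QBKext.sn2 A B)
      (fiff_trans (fiff_and (s1 h1) (s2 h2)) (fiff_symm (QBKext.sn2 A' B'))))

theorem siff_and {A A' B B' : Formula σ} (h1 : QBKext σ Ex (A.siff A'))
    (h2 : QBKext σ Ex (B.siff B')) : QBKext σ Ex ((A.and B).siff (A'.and B')) :=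
  siffI (fiff_and (s1 h1) (s1 h2))
    (fiff_trans (QBKext.sn4 A B)
      (fiff_trans (fiff_or (s2 h1) (s2 h2)) (fiff_symm (QBKext.sn4 A' B'))))

theorem siff_or {A A' B B' : Formula σ} (h1 : QBKext σ Ex (A.siff A'))
    (h2 : QBKext σ Ex (B.siff B')) : QBKext σ Ex ((A.or B).siff (A'.or B')) :=
  siffI (fiff_or (s1 h1) (s1 h2))
    (fiff_trans (QBKext.sn3 A B)
      (fiff_trans (fiff_and (s2 h1) (s2 h2)) (fiff_symm (QBKext.sn3 A' B'))))

theorem nbox_dian (A : Formula σ) : QBKext σ Ex (A.box.snot.fiff A.snot.dia) :=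
  fiff_trans (andE2 (QBKext.m3 A)) (QBKext.sn1 A.snot.dia)

theorem ndia_boxn (A : Formula σ) : QBKext σ Ex (A.dia.snot.fiff A.snot.box) :=
  fiff_trans (andE2 (QBKext.m4 A)) (QBKext.sn1 A.snot.box)

theorem siff_box {A B : Formula σ} (h : QBKext σ Ex (A.siff B)) :
    QBKext σ Ex (A.box.siff B.box) :=
  siffI (fiff_box (s1 h))
    (fiff_trans (nbox_dian A) (fiff_trans (fiff_dia (s2 h)) (fiff_symm (nbox_dian B))))

theorem siff_dia {A B : Formula σ} (h : QBKext σ Ex (A.siff B)) :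
    QBKext σ Ex (A.dia.siff B.dia) :=
  siffI (fiff_dia (s1 h))
    (fiff_trans (ndia_boxn A) (fiff_trans (fiff_box (s2 h)) (fiff_symm (ndia_boxn B))))

theorem siff_all {x : ℕ} {A B : Formula σ} (h : QBKext σ Ex (A.siff B)) :
    QBKext σ Ex ((Formula.all x A).siff (Formula.all x B)) :=
  siffI (fiff_all (s1 h))
    (fiff_trans (QBKext.q3 x A) (fiff_trans (fiff_ex (s2 h)) (fiff_symm (QBKext.q3 x B))))

theorem siff_ex {x : ℕ} {A B : Formula σ} (h : QBKext σ Ex (A.siff B)) :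
    QBKext σ Ex ((Formula.ex x A).siff (Formula.ex x B)) :=
  siffI (fiff_ex (s1 h))
    (fiff_trans (QBKext.q4 x A) (fiff_trans (fiff_all (s2 h)) (fiff_symm (QBKext.q4 x B))))

/-! push lemmas -/

theorem sP_nn (A : Formula σ) : QBKext σ Ex (A.snot.snot.siff A) :=
  siffI (QBKext.sn1 A) (QBKext.sn1 A.snot)

theorem sP_and (A B : Formula σ) : QBKext σ Ex ((A.and B).snot.siff (A.snot.or B.snot)) :=
  siffI (QBKext.sn4 A B)
    (fiff_trans (QBKext.sn1 (A.and B))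
      (fiff_trans (fiff_and (fiff_symm (QBKext.sn1 A)) (fiff_symm (QBKext.sn1 B)))
        (fiff_symm (QBKext.sn3 A.snot B.snot))))

theorem sP_or (A B : Formula σ) : QBKext σ Ex ((A.or B).snot.siff (A.snot.and B.snot)) :=
  siffI (QBKext.sn3 A B)
    (fiff_trans (QBKext.sn1 (A.or B))
      (fiff_trans (fiff_or (fiff_symm (QBKext.sn1 A)) (fiff_symm (QBKext.sn1 B)))
        (fiff_symm (QBKext.sn4 A.snot B.snot))))

theorem sP_box (A : Formula σ) : QBKext σ Ex (A.box.snot.siff A.snot.dia) :=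
  siffI (nbox_dian A) (fiff_trans (QBKext.sn1 A.box) (andE1 (QBKext.m3 A)))

theorem sP_dia (A : Formula σ) : QBKext σ Ex (A.dia.snot.siff A.snot.box) :=
  siffI (ndia_boxn A) (fiff_trans (QBKext.sn1 A.dia) (andE1 (QBKext.m4 A)))

theorem sP_all (x : ℕ) (A : Formula σ) :
    QBKext σ Ex ((Formula.all x A).snot.siff (Formula.ex x A.snot)) :=
  siffI (QBKext.q3 x A)
    (fiff_trans (QBKext.sn1 (Formula.all x A))
      (fiff_trans (fiff_all (fiff_symm (QBKext.sn1 A))) (fiff_symm (QBKext.q4 x A.snot))))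

theorem sP_ex (x : ℕ) (A : Formula σ) :
    QBKext σ Ex ((Formula.ex x A).snot.siff (Formula.all x A.snot)) :=
  siffI (QBKext.q4 x A)
    (fiff_trans (QBKext.sn1 (Formula.ex x A))
      (fiff_trans (fiff_ex (fiff_symm (QBKext.sn1 A))) (fiff_symm (QBKext.q3 x A.snot))))

theorem sP_imp (A B : Formula σ) :
    QBKext σ Ex ((A.imp B).snot.siff (A.neg.neg.and B.snot)) := by
  have c1 : QBKext σ Ex ((A.imp B).snot.fiff (A.neg.neg.and B.snot)) :=
    fiff_trans (QBKext.sn2 A B) (fiff_and (fiff_nn A) (fiff_refl B.snot))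
  have right : QBKext σ Ex ((A.neg.neg.and B.snot).snot.fiff (A.neg.or B)) :=
    fiff_trans (QBKext.sn4 A.neg.neg B.snot)
      (fiff_or (snnn_iff A) (QBKext.sn1 B))
  have c2 : QBKext σ Ex ((A.imp B).snot.snot.fiff (A.neg.neg.and B.snot).snot) :=
    fiff_trans (QBKext.sn1 (A.imp B)) (fiff_trans (imp_iff_or A B) (fiff_symm right))
  exact siffI c1 c2

/-! the NNF transform -/

def nnf {σ : Sig} : Formula σ → Bool → Formula σ
  | .atom P ts, true => .atom P ts
  | .atom P ts, false => (Formula.atom P ts).snot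
  | .bot, true => .bot
  | .bot, false => Formula.bot.snot
  | .imp A B, true => (nnf A true).imp (nnf B true)
  | .imp A B, false => ((nnf A true).neg.neg).and (nnf B false)
  | .and A B, true => (nnf A true).and (nnf B true)
  | .and A B, false => (nnf A false).or (nnf B false)
  | .or A B, true => (nnf A true).or (nnf B true)
  | .or A B, false => (nnf A false).and (nnf B false)
  | .snot A, b => nnf A (!b)
  | .box A, true => (nnf A true).box
  | .box A, false => (nnf A false).dia
  | .dia A, true => (nnf A true).dia
  | .dia A, false => (nnf A false).box
  | .all x A, true => .all x (nnf A true)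
  | .all x A, false => .ex x (nnf A false)
  | .ex x A, true => .ex x (nnf A true)
  | .ex x A, false => .all x (nnf A false)

theorem nnf_isNNF {σ : Sig} (A : Formula σ) : ∀ b, IsNNF (nnf A b) := by
  induction A with
  | atom P ts => intro b; cases b <;> simp [nnf, IsNNF]
  | bot => intro b; cases b <;> simp [nnf, IsNNF]
  | imp A B ihA ihB =>
    intro b; cases b
    · exact ⟨⟨⟨ihA true, trivial⟩, trivial⟩, ihB false⟩
    · exact ⟨ihA true, ihB true⟩
  | and A B ihA ihB => intro b; cases b
                       · exact ⟨ihA false, ihB false⟩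
                       · exact ⟨ihA true, ihB true⟩
  | or A B ihA ihB => intro b; cases b
                      · exact ⟨ihA false, ihB false⟩
                      · exact ⟨ihA true, ihB true⟩
  | snot A ih => intro b; exact ih (!b)
  | box A ih => intro b; cases b
                · exact ih false
                · exact ih true
  | dia A ih => intro b; cases b
                · exact ih false
                · exact ih true
  | all x A ih => intro b; cases b
                  · exact ih false
                  · exact ih true
  | ex x A ih => intro b; cases b
                 · exact ih false
                 · exact ih true

theorem nnf_siff (A : Formula σ) :
    ∀ b : Bool, QBKext σ Ex ((cond b A A.snot).siff (nnf A b)) := by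
  induction A with
  | atom P ts => intro b; cases b <;> exact siff_refl _
  | bot => intro b; cases b <;> exact siff_refl _
  | imp A B ihA ihB =>
    intro b; cases b
    · exact siff_trans (sP_imp A B)
        (siff_and (siff_imp (siff_imp (ihA true) (siff_refl Formula.bot)) (siff_refl Formula.bot))
          (ihB false))
    · exact siff_imp (ihA true) (ihB true)
  | and A B ihA ihB =>
    intro b; cases b
    · exact siff_trans (sP_and A B) (siff_or (ihA false) (ihB false))
    · exact siff_and (ihA true) (ihB true)
  | or A B ihA ihB =>
    intro b; cases b
    · exact siff_trans (sP_or A B) (siff_and (ihA false) (ihB false))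
    · exact siff_or (ihA true) (ihB true)
  | snot A ih =>
    intro b; cases b
    · exact siff_trans (sP_nn A) (ih true)
    · exact ih false
  | box A ih =>
    intro b; cases b
    · exact siff_trans (sP_box A) (siff_dia (ih false))
    · exact siff_box (ih true)
  | dia A ih =>
    intro b; cases b
    · exact siff_trans (sP_dia A) (siff_box (ih false))
    · exact siff_dia (ih true)
  | all x A ih =>
    intro b; cases b
    · exact siff_trans (sP_all x A) (siff_ex (ih false))
    · exact siff_all (ih true)
  | ex x A ih =>
    intro b; cases b
    · exact siff_trans (sP_ex x A) (siff_all (ih false))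
    · exact siff_ex (ih true)

end NNFAux

/-- **Negative normal form theorem**: every σ-formula is strongly equivalent in QBK_σ to a
formula in negative normal form. -/
theorem negative_normal_form (σ : Sig) (Φ : Formula σ) :
    ∃ Φ' : Formula σ, IsNNF Φ' ∧ QBK σ (Φ.siff Φ') := by
  exact ⟨NNFAux.nnf Φ true, NNFAux.nnf_isNNF Φ true, NNFAux.nnf_siff Φ true⟩
end
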